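/- Let k and c be positive real constants. Suppose n is a real number satisfying n ≥ e^{√2 · c^{−1/2}} and k² c² (log n)⁴ ≤ n. If n ≤ k z + c (log n)² for some real z ≥ 2/k, then n ≤ k z + 4c (log z)². -/
import Mathlib


theorem aux_inequality_two (k c : ℝ) (hk : 0 < k) (hc : 0 < c) (n : ℝ)
    (hn1 : Real.exp (Real.sqrt 2 / Real.sqrt c) ≤ n)
    (hn2 : k ^ 2 * c ^ 2 * (Real.log n) ^ 4 ≤ n) :
    ∀ z : ℝ, 2 / k ≤ z → n ≤ k * z + c * (Real.log n) ^ 2 →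
      n ≤ k * z + 4 * c * (Real.log z) ^ 2 := by
  intro z hz hnz
  set L := Real.log n with hLdef
  have hc' : (0:ℝ) < Real.sqrt c := Real.sqrt_pos.mpr hc
  have hpos : (0:ℝ) < Real.sqrt 2 / Real.sqrt c :=
    div_pos (Real.sqrt_pos.mpr (by norm_num)) hc'
  have hn1' : (1:ℝ) < n := by
    calc (1:ℝ) = Real.exp 0 := by simp
    _ < Real.exp (Real.sqrt 2 / Real.sqrt c) := Real.exp_lt_exp.mpr hpos
    _ ≤ n := hn1
  have hn0 : (0:ℝ) < n := by linarith
  have hL : Real.sqrt 2 / Real.sqrt c ≤ L :=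
    (Real.le_log_iff_exp_le hn0).mpr hn1
  have hLpos : 0 < L := lt_of_lt_of_le hpos hL
  have hsq2 : (Real.sqrt 2 / Real.sqrt c) ^ 2 = 2 / c := by
    rw [div_pow, Real.sq_sqrt (by norm_num : (0:ℝ) ≤ 2), Real.sq_sqrt hc.le]
  have hcL2 : 2 ≤ c * L ^ 2 := by
    have h2 : (Real.sqrt 2 / Real.sqrt c) ^ 2 ≤ L ^ 2 :=
      pow_le_pow_left₀ hpos.le hL 2
    rw [hsq2] at h2
    rw [div_le_iff₀ hc] at h2
    linarith
  set s := Real.sqrt n with hsdef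
  have hs0 : 0 ≤ s := Real.sqrt_nonneg n
  have hssq : s ^ 2 = n := Real.sq_sqrt hn0.le
  have hsq : k * (c * L ^ 2) ≤ s := by
    have h1 : Real.sqrt ((k * (c * L ^ 2)) ^ 2) ≤ Real.sqrt n :=
      Real.sqrt_le_sqrt (by nlinarith [hn2])
    rwa [Real.sqrt_sq (by positivity)] at h1
  have hspos : 0 < s := Real.sqrt_pos.mpr hn0
  have hzs : s ≤ z := by
    by_cases hcase : c * L ^ 2 < n / 2
    · -- k z ≥ n/2, and √n ≥ 2k
      have h2k : 2 * k ≤ s := by nlinarith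
      nlinarith
    · push_neg at hcase
      have hks : k * s ≤ 2 := by nlinarith
      have : s ≤ 2 / k := by rw [le_div_iff₀ hk]; linarith
      linarith
  have hlz : L / 2 ≤ Real.log z := by
    have := Real.log_le_log hspos hzs
    rw [hsdef, Real.log_sqrt hn0.le] at this
    linarith
  have hlz2 : (L / 2) ^ 2 ≤ (Real.log z) ^ 2 :=
    pow_le_pow_left₀ (by positivity) hlz 2
  nlinarith [hlz2, hnz, hc.le]
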